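/- For every integer k ≥ 2 there exists an integer r such that the rainbow k-connectivity of K_{r,r} equals 3; in particular r = 2k·⌈k/2⌉ works. -/

import Mathlib

open SimpleGraph

/-- The complete bipartite graph `K_{r,r}` with both parts `Fin r`. -/
abbrev Krr (r : ℕ) : SimpleGraph (Fin r ⊕ Fin r) :=
  completeBipartiteGraph (Fin r) (Fin r)

/-- A walk is a rainbow path (w.r.t. edge-coloring `c`) if it is a path and
all its edges receive pairwise distinct colors. -/
def RainbowPath {V α : Type*} {G : SimpleGraph V} (c : Sym2 V → α) {u v : V}
    (p : G.Walk u v) : Prop :=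
  p.IsPath ∧ (p.edges.map c).Nodup

/-- Two `u`-`v` walks are internally disjoint if they share no vertices other
than `u` and `v`. -/
def IntDisjoint {V : Type*} {G : SimpleGraph V} {u v : V}
    (p q : G.Walk u v) : Prop :=
  ∀ x, x ∈ p.support → x ∈ q.support → x = u ∨ x = v

/-- `G` admits a `j`-edge-coloring under which every two distinct vertices are
joined by at least `k` internally disjoint rainbow paths. -/
def HasRainbowKColoring {V : Type*} (G : SimpleGraph V) (k j : ℕ) : Prop :=
  ∃ c : Sym2 V → Fin j, ∀ u v : V, u ≠ v →
    ∃ P : Fin k → G.Walk u v, Function.Injective P ∧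
      (∀ i, RainbowPath c (P i)) ∧
      ∀ i i', i ≠ i' → IntDisjoint (P i) (P i')

/-- The rainbow `k`-connectivity: the least number of colors as above. -/
noncomputable def rck {V : Type*} (G : SimpleGraph V) (k : ℕ) : ℕ :=
  sInf {j | HasRainbowKColoring G k j}

/-!
Lower bound. A rainbow path has at most as many edges as there are colours. With one colour,
only adjacent vertices are joined by rainbow paths, and two vertices on the same side of
`K_{r,r}` are not adjacent; with two colours, the only rainbow path between the ends of an edge
of a triangle-free graph is the edge itself.

Upper bound. Write `r = 2km` with `m = ⌈k/2⌉` and label each side by triples `(x, σ, τ)`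
(block `x < k`, sign `σ < 2`, tag `τ < m`). The edge between `(x, σ, τ)` and `(y, ρ, t)` gets
colour `([x = y] + [τ = t]) (σ + ρ) mod 3`. Two vertices on one side see different colours
towards at least `k` vertices of the other side (this is where `k ≤ 2m` enters), giving `k`
rainbow paths of length two; a vertex and one on the other side are joined by their edge and
by `k - 1` rainbow paths of length three through distinct blocks.
-/

open Finset

section RainbowPaths

variable {V : Type*} {G : SimpleGraph V} {k j : ℕ}

def RainbowLinked (G : SimpleGraph V) (c : Sym2 V → Fin j) (k : ℕ) (u v : V) : Prop :=
  ∃ P : Fin k → G.Walk u v, Function.Injective P ∧ (∀ i, RainbowPath c (P i)) ∧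
    ∀ i i', i ≠ i' → IntDisjoint (P i) (P i')

theorem SimpleGraph.Walk.eq_toWalk_of_length_eq_one {u v : V} (h : G.Adj u v) {p : G.Walk u v}
    (hp : p.length = 1) : p = h.toWalk := by
  rcases p with _ | ⟨_, _ | _⟩ <;> simp_all

theorem RainbowPath.length_le {c : Sym2 V → Fin j} {u v : V} {p : G.Walk u v}
    (hp : RainbowPath c p) : p.length ≤ j := by
  simpa [Walk.length_edges] using hp.2.length_le_card

theorem RainbowLinked.symm {c : Sym2 V → Fin j} {u v : V} (h : RainbowLinked G c k u v) :
    RainbowLinked G c k v u := by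
  obtain ⟨P, hinj, hrb, hdis⟩ := h
  refine ⟨fun i => (P i).reverse, Walk.reverse_injective.comp hinj,
    fun i => ⟨(hrb i).1.reverse, ?_⟩,
    fun i i' hii' x hx hx' => (hdis i i' hii' x (by simpa using hx) (by simpa using hx')).symm⟩
  simpa [Walk.edges_reverse, List.map_reverse] using (hrb i).2

theorem RainbowLinked.map {W : Type*} {G' : SimpleGraph W} (e : G ≃g G') {c : Sym2 V → Fin j}
    {u v : V} (h : RainbowLinked G c k u v) :
    RainbowLinked G' (c ∘ Sym2.map e.symm) k (e u) (e v) := by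
  obtain ⟨P, hinj, hrb, hdis⟩ := h
  have hc : (c ∘ Sym2.map e.symm) ∘ Sym2.map e = c := by
    ext z; simp [Sym2.map_map, Function.comp_def]
  refine ⟨fun i => (P i).map e.toHom, (Walk.map_injective_of_injective e.injective u v).comp hinj,
    fun i => ⟨(hrb i).1.map e.injective, ?_⟩, fun i i' hii' x hx hx' => ?_⟩
  · simpa [Walk.edges_map, List.map_map, hc] using (hrb i).2
  · simp only [Walk.support_map, List.mem_map] at hx hx'
    obtain ⟨y, hy, rfl⟩ := hx
    obtain ⟨y', hy', hyy'⟩ := hx'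
    obtain rfl : y' = y := e.injective hyy'
    simpa using hdis i i' hii' _ hy hy'

theorem HasRainbowKColoring.of_iso {W : Type*} {G' : SimpleGraph W} (e : G ≃g G')
    (h : HasRainbowKColoring G k j) : HasRainbowKColoring G' k j := by
  obtain ⟨c, hc⟩ := h
  refine ⟨c ∘ Sym2.map e.symm, fun u' v' huv => ?_⟩
  obtain ⟨u, rfl⟩ := e.surjective u'
  obtain ⟨v, rfl⟩ := e.surjective v'
  exact RainbowLinked.map e (hc u v (ne_of_apply_ne e huv))

theorem not_hasRainbowKColoring_zero [Nonempty V] : ¬ HasRainbowKColoring G k 0 :=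
  fun ⟨c, _⟩ => (c s(Classical.arbitrary V, Classical.arbitrary V)).elim0

theorem HasRainbowKColoring.adj_of_one (h : HasRainbowKColoring G k 1) (hk : 0 < k) {u v : V}
    (huv : u ≠ v) : G.Adj u v := by
  obtain ⟨c, hc⟩ := h
  obtain ⟨P, -, hrb, -⟩ := hc u v huv
  have hpos : (P ⟨0, hk⟩).length ≠ 0 := fun h0 => huv (Walk.eq_of_length_eq_zero h0)
  have hle := (hrb ⟨0, hk⟩).length_le
  exact Walk.adj_of_length_eq_one (p := P ⟨0, hk⟩) (by omega)

theorem HasRainbowKColoring.exists_common_neighbor (h : HasRainbowKColoring G k 2) (hk : 2 ≤ k)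
    {u v : V} (huv : G.Adj u v) : ∃ w, G.Adj u w ∧ G.Adj w v := by
  obtain ⟨c, hc⟩ := h
  obtain ⟨P, hinj, hrb, -⟩ := hc u v huv.ne
  obtain ⟨i, hi⟩ : ∃ i, (P i).length = 2 := by
    by_contra! hne
    have hone : ∀ i, (P i).length = 1 := fun i => by
      have := (hrb i).length_le
      have : (P i).length ≠ 0 := fun h0 => huv.ne (Walk.eq_of_length_eq_zero h0)
      have := hne i
      omega
    have h01 := hinj ((Walk.eq_toWalk_of_length_eq_one huv (hone ⟨0, by omega⟩)).trans
      (Walk.eq_toWalk_of_length_eq_one huv (hone ⟨1, by omega⟩)).symm)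
    simp [Fin.ext_iff] at h01
  obtain ⟨w, hw⟩ := G.walkLengthTwoEquivCommonNeighbors u v ⟨P i, hi⟩
  exact ⟨w, hw.1, hw.2.symm⟩

theorem rainbowLinked_of_commonNeighbors {c : Sym2 V → Fin j} {u v : V} (huv : u ≠ v)
    (M : Fin k → V) (hM : M.Injective) (hu : ∀ i, G.Adj u (M i)) (hv : ∀ i, G.Adj (M i) v)
    (hc : ∀ i, c s(u, M i) ≠ c s(M i, v)) : RainbowLinked G c k u v := by
  refine ⟨fun i => .cons (hu i) (hv i).toWalk, fun i i' h => hM ?_, fun i => ⟨?_, ?_⟩, ?_⟩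
  · simpa using congrArg Walk.support h
  · exact Walk.IsPath.mk' (by simp [huv, (hu i).ne, (hv i).ne])
  · simpa using hc i
  · intro i i' hii' x hx hx'
    simp only [Walk.support_cons, Walk.support_nil, List.mem_cons, List.not_mem_nil,
      or_false] at hx hx'
    rcases hx with rfl | rfl | rfl <;> simp_all [hM.eq_iff]

end RainbowPaths

theorem exists_injective_mem_of_le_card {β : Type*} {s : Finset β} {n : ℕ} (h : n ≤ #s) :
    ∃ f : Fin n → β, f.Injective ∧ ∀ i, f i ∈ s :=
  ⟨fun i => s.equivFin.symm (Fin.castLE h i),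
    Subtype.val_injective.comp (s.equivFin.symm.injective.comp (Fin.castLE_injective h)),
    fun _ => (s.equivFin.symm _).prop⟩

section CompleteBipartite

variable {α β : Type*} {j k : ℕ}

theorem completeBipartiteGraph_adj_inl_inr (a : α) (b : β) :
    (completeBipartiteGraph α β).Adj (.inl a) (.inr b) := by
  simp

def IsRainbowDetour (c : Sym2 (α ⊕ β) → Fin j) (a : α) (b : β) (w : β) (z : α) : Prop :=
  w ≠ b ∧ z ≠ a ∧ [c s(.inl a, .inr w), c s(.inl z, .inr w), c s(.inl z, .inr b)].Nodup

def detourWalk (a : α) (w : β) (z : α) (b : β) :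
    (completeBipartiteGraph α β).Walk (.inl a) (.inr b) :=
  .cons (completeBipartiteGraph_adj_inl_inr a w)
    (.cons (completeBipartiteGraph_adj_inl_inr z w).symm
      (completeBipartiteGraph_adj_inl_inr z b).toWalk)

theorem rainbowPath_detourWalk {c : Sym2 (α ⊕ β) → Fin j} {a : α} {b : β} {w : β} {z : α}
    (h : IsRainbowDetour c a b w z) : RainbowPath c (detourWalk a w z b) := by
  obtain ⟨hwb, hza, hc⟩ := h
  refine ⟨Walk.IsPath.mk' ?_, ?_⟩
  · simp [detourWalk, hwb, Ne.symm hza]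
  · simpa [detourWalk, Sym2.eq_swap] using hc

theorem rainbowLinked_of_detours {c : Sym2 (α ⊕ β) → Fin j} {a : α} {b : β} {n : ℕ}
    (w : Fin n → β) (z : Fin n → α) (hw : w.Injective) (hz : z.Injective)
    (hd : ∀ i, IsRainbowDetour c a b (w i) (z i)) :
    RainbowLinked (completeBipartiteGraph α β) c (n + 1) (.inl a) (.inr b) := by
  have hdetour_inj : Function.Injective fun i => detourWalk a (w i) (z i) b := fun i i' h => by
    have hsupp := congrArg Walk.support h
    simp only [detourWalk, Walk.support_cons, List.cons.injEq,
      Sum.inr.injEq, Sum.inl.injEq] at hsupp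
    exact hw hsupp.2.1
  refine ⟨Fin.cons (completeBipartiteGraph_adj_inl_inr a b).toWalk
    fun i => detourWalk a (w i) (z i) b, Fin.cons_injective_iff.2 ⟨?_, hdetour_inj⟩, ?_, ?_⟩
  · rintro ⟨i, hi⟩
    simpa [detourWalk] using congrArg Walk.length hi
  · intro i
    cases i using Fin.cases with
    | zero => exact ⟨by simp, by simp⟩
    | succ i => exact rainbowPath_detourWalk (hd i)
  · intro i i' hii' x hx hx'
    cases i using Fin.cases <;> cases i' using Fin.cases
    · exact absurd rfl hii'
    · simp_all
    · simp_all
    · rename_i i i'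
      have hne : i ≠ i' := fun h => hii' (congrArg Fin.succ h)
      simp only [Fin.cons_succ, detourWalk, Walk.support_cons, Walk.support_nil,
        List.mem_cons, List.not_mem_nil, or_false] at hx hx'
      rcases hx with rfl | rfl | rfl | rfl <;> simp_all [hw.eq_iff, hz.eq_iff]

theorem completeBipartiteGraph.hasRainbowKColoring_of_detours [Fintype α] [Fintype β] {n : ℕ}
    (c : Sym2 (α ⊕ β) → Fin j)
    (hleft : ∀ a a', a ≠ a' → n + 1 ≤ #{b | c s(.inl a, .inr b) ≠ c s(.inl a', .inr b)})
    (hright : ∀ b b', b ≠ b' → n + 1 ≤ #{a | c s(.inl a, .inr b) ≠ c s(.inl a, .inr b')})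
    (hcross : ∀ a b, ∃ (w : Fin n → β) (z : Fin n → α), w.Injective ∧ z.Injective ∧
      ∀ i, IsRainbowDetour c a b (w i) (z i)) :
    HasRainbowKColoring (completeBipartiteGraph α β) (n + 1) j := by
  refine ⟨c, ?_⟩
  rintro (a | b) (a' | b') h
  · obtain ⟨M, hM, hMc⟩ := exists_injective_mem_of_le_card (hleft a a' (by simpa using h))
    refine rainbowLinked_of_commonNeighbors h (.inr ∘ M) (Sum.inr_injective.comp hM)
      (fun i => by simp) (fun i => by simp) fun i => ?_
    simpa [Sym2.eq_swap] using hMc i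
  · obtain ⟨w, z, hw, hz, hd⟩ := hcross a b'
    exact rainbowLinked_of_detours w z hw hz hd
  · obtain ⟨w, z, hw, hz, hd⟩ := hcross a' b
    exact (rainbowLinked_of_detours w z hw hz hd).symm
  · obtain ⟨M, hM, hMc⟩ := exists_injective_mem_of_le_card (hright b b' (by simpa using h))
    refine rainbowLinked_of_commonNeighbors h (.inl ∘ M) (Sum.inl_injective.comp hM)
      (fun i => by simp) (fun i => by simp) fun i => ?_
    simpa [Sym2.eq_swap] using hMc i

theorem completeBipartiteGraph.rck_eq_three [Nontrivial α] [Nonempty β] (hk : 2 ≤ k)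
    (h : HasRainbowKColoring (completeBipartiteGraph α β) k 3) :
    rck (completeBipartiteGraph α β) k = 3 := by
  have h1 : ¬ HasRainbowKColoring (completeBipartiteGraph α β) k 1 := fun h1 => by
    obtain ⟨a, a', haa'⟩ := exists_pair_ne α
    simpa using h1.adj_of_one (by omega) (Sum.inl_injective.ne haa')
  have h2 : ¬ HasRainbowKColoring (completeBipartiteGraph α β) k 2 := fun h2 => by
    obtain ⟨w, hw₁, hw₂⟩ := h2.exists_common_neighbor hk
      (completeBipartiteGraph_adj_inl_inr (Classical.arbitrary α) (Classical.arbitrary β))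
    rcases w with _ | _ <;> simp_all
  refine le_antisymm (Nat.sInf_le h) (le_csInf ⟨3, h⟩ fun j hj => ?_)
  by_contra! hj3
  interval_cases j
  exacts [not_hasRainbowKColoring_zero hj, h1 hj, h2 hj]

end CompleteBipartite

section BlockColor

variable {k m : ℕ}

def agreeColor (sameBlock sameTag : Bool) (σ ρ : Fin 2) : Fin 3 :=
  Fin.ofNat 3 ((sameBlock.toNat + sameTag.toNat) * (σ.val + ρ.val))

-- `σ + 1` is a unit mod 3: towards sign `1`, the colour tells how many coordinates agree.
theorem agreeColor_one_ne (σ : Fin 2) {b c b' c' : Bool}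
    (h : b.toNat + c.toNat ≠ b'.toNat + c'.toNat) :
    agreeColor b c σ 1 ≠ agreeColor b' c' σ 1 := by
  revert σ b c b' c'
  decide

def blockColor (u v : Fin k × Fin 2 × Fin m) : Fin 3 :=
  agreeColor (u.1 = v.1) (u.2.2 = v.2.2) u.2.1 v.2.1

theorem blockColor_comm (u v : Fin k × Fin 2 × Fin m) : blockColor u v = blockColor v u := by
  simp only [blockColor, agreeColor, eq_comm (a := u.1), eq_comm (a := u.2.2), add_comm u.2.1.val]

theorem blockColor_map {k' m' : ℕ} {f : Fin k → Fin k'} {g : Fin m → Fin m'}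
    (hf : f.Injective) (hg : g.Injective) (u v : Fin k × Fin 2 × Fin m) :
    blockColor (Prod.map f (Prod.map id g) u) (Prod.map f (Prod.map id g) v) = blockColor u v := by
  simp [blockColor, hf.eq_iff, hg.eq_iff]

theorem le_card_blockColor_ne_of_sign_eq (hkm : k ≤ 2 * m) {x x' : Fin k} {σ : Fin 2}
    {τ τ' : Fin m} (h : (x, τ) ≠ (x', τ')) :
    k ≤ #{v | blockColor (x, σ, τ) v ≠ blockColor (x', σ, τ') v} := by
  by_cases hx : x = x'
  · subst hx
    have hτ : τ ≠ τ' := by simpa using h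
    calc k = #(univ.image fun y => (y, (1 : Fin 2), τ)) := by
          rw [card_image_of_injective _ fun y y' h => (Prod.mk.inj h).1]; simp
      _ ≤ _ := card_le_card fun v hv => by
          obtain ⟨y, -, rfl⟩ := mem_image.1 hv
          exact mem_filter.2 ⟨mem_univ _, agreeColor_one_ne σ (by simp [hτ.symm])⟩
  by_cases hτ : τ = τ'
  · subst hτ
    calc k ≤ #(({x, x'} : Finset (Fin k)) ×ˢ (({1} : Finset (Fin 2)) ×ˢ univ)) := by
          simp [card_pair hx]; omega
      _ ≤ _ := card_le_card fun v hv => by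
          obtain ⟨y, ρ, t⟩ := v
          simp only [mem_product, mem_insert, mem_singleton] at hv
          obtain ⟨rfl | rfl, rfl, -⟩ := hv
          · exact mem_filter.2 ⟨mem_univ _, agreeColor_one_ne σ (by simp [Ne.symm hx])⟩
          · exact mem_filter.2 ⟨mem_univ _, agreeColor_one_ne σ (by simp [hx])⟩
  set S := (univ.erase x').image fun y => (y, (1 : Fin 2), τ)
  have hnew : (x', (1 : Fin 2), τ') ∉ S := by simp [S]
  calc k = #(insert (x', (1 : Fin 2), τ') S) := by
        rw [card_insert_of_notMem hnew, card_image_of_injective _ fun y y' h => (Prod.mk.inj h).1,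
          card_erase_of_mem (mem_univ _), card_univ, Fintype.card_fin]
        have := x.pos
        omega
    _ ≤ _ := card_le_card fun v hv => by
        obtain rfl | ⟨y, hy, rfl⟩ := by simpa only [S, mem_insert, mem_image] using hv
        · exact mem_filter.2 ⟨mem_univ _, agreeColor_one_ne σ (by simp [hx, hτ])⟩
        · exact mem_filter.2 ⟨mem_univ _,
            agreeColor_one_ne σ (by simp [(mem_erase.1 hy).1.symm, Ne.symm hτ])⟩

theorem le_card_blockColor_ne_of_sign_ne {x x' : Fin k} {σ σ' : Fin 2} {τ τ' : Fin m}
    (hσ : σ ≠ σ') : k ≤ #{v | blockColor (x, σ, τ) v ≠ blockColor (x', σ', τ') v} := by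
  wlog hσ0 : σ = 0 generalizing x σ τ x' σ' τ'
  · have hσ'0 : σ' = 0 := by fin_cases σ <;> fin_cases σ' <;> simp_all
    simpa only [ne_comm] using this hσ.symm hσ'0
  subst hσ0
  obtain rfl : σ' = 1 := by fin_cases σ' <;> simp_all
  -- towards sign `0`, the vertex of sign `0` sees only colour `0`
  have hdiff : ∀ b c b', agreeColor b c 0 0 ≠ agreeColor b' true 1 0 := by decide
  calc k = #(univ.image fun y => (y, (0 : Fin 2), τ')) := by
        rw [card_image_of_injective _ fun y y' h => (Prod.mk.inj h).1]; simp
    _ ≤ _ := card_le_card fun v hv => by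
        obtain ⟨y, -, rfl⟩ := mem_image.1 hv
        exact mem_filter.2 ⟨mem_univ _, by simpa [blockColor] using hdiff _ _ _⟩

theorem le_card_blockColor_ne (hkm : k ≤ 2 * m) {u u' : Fin k × Fin 2 × Fin m} (h : u ≠ u') :
    k ≤ #{v | blockColor u v ≠ blockColor u' v} := by
  obtain ⟨x, σ, τ⟩ := u
  obtain ⟨x', σ', τ'⟩ := u'
  obtain rfl | hσ := eq_or_ne σ σ'
  · exact le_card_blockColor_ne_of_sign_eq hkm fun h' => h (by simp_all)
  · exact le_card_blockColor_ne_of_sign_ne hσ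

def blockColoring : Sym2 ((Fin k × Fin 2 × Fin m) ⊕ (Fin k × Fin 2 × Fin m)) → Fin 3 :=
  Sym2.lift ⟨fun p q => blockColor (Sum.elim id id p) (Sum.elim id id q),
    fun _ _ => blockColor_comm _ _⟩

@[simp] theorem blockColoring_inl_inr (a b : Fin k × Fin 2 × Fin m) :
    blockColoring s(.inl a, .inr b) = blockColor a b :=
  rfl

theorem exists_blockColor_detour_three_two :
    ∀ (a b : Fin 3 × Fin 2 × Fin 2) (i : Fin 3), ∃ s t : Fin 2 × Fin 2,
      (i, s) ≠ b ∧ (i, t) ≠ a ∧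
      [blockColor a (i, s), blockColor (i, t) (i, s), blockColor (i, t) b].Nodup := by
  decide

-- With a single tag (`k = 2`) a detour need not exist inside a prescribed block.
theorem exists_blockColor_detour_two_one :
    ∀ a b : Fin 2 × Fin 2 × Fin 1, ∃ w z, w ≠ b ∧ z ≠ a ∧
      [blockColor a w, blockColor z w, blockColor z b].Nodup := by
  decide

theorem exists_embedding_fin_superset {α : Type*} [Fintype α] [LinearOrder α] (s : Finset α)
    {n : ℕ} (hs : #s ≤ n) (hn : n ≤ Fintype.card α) :
    ∃ f : Fin n ↪ α, ↑s ⊆ Set.range f := by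
  obtain ⟨t, hst, ht⟩ := exists_superset_card_eq hs hn
  exact ⟨(t.orderEmbOfFin ht).toEmbedding, by simpa [range_orderEmbOfFin] using hst⟩

-- `blockColor` only sees which block and tag coordinates agree, so every configuration of
-- `a`, `b` and the block `i` already occurs with three blocks and two tags.
theorem exists_blockColor_detour (hk : 3 ≤ k) (hm : 2 ≤ m) (a b : Fin k × Fin 2 × Fin m)
    (i : Fin k) : ∃ s t : Fin 2 × Fin m, (i, s) ≠ b ∧ (i, t) ≠ a ∧
      [blockColor a (i, s), blockColor (i, t) (i, s), blockColor (i, t) b].Nodup := by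
  obtain ⟨f, hf⟩ := exists_embedding_fin_superset {a.1, b.1, i} card_le_three
    (by simpa using hk)
  obtain ⟨g, hg⟩ := exists_embedding_fin_superset {a.2.2, b.2.2} card_le_two
    (by simpa using hm)
  set φ : Fin 3 × Fin 2 × Fin 2 → Fin k × Fin 2 × Fin m := Prod.map f (Prod.map id g)
  have hφ : φ.Injective := f.injective.prodMap (Function.injective_id.prodMap g.injective)
  have hpre : ∀ v : Fin k × Fin 2 × Fin m, v.1 ∈ Set.range f → v.2.2 ∈ Set.range g →
      v ∈ Set.range φ := by
    rintro ⟨x, σ, τ⟩ ⟨x₀, rfl⟩ ⟨τ₀, rfl⟩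
    exact ⟨(x₀, σ, τ₀), rfl⟩
  obtain ⟨a₀, rfl⟩ := hpre a (hf (by simp)) (hg (by simp))
  obtain ⟨b₀, rfl⟩ := hpre b (hf (by simp)) (hg (by simp))
  obtain ⟨i₀, rfl⟩ := hf (by simp : i ∈ ({(φ a₀).1, (φ b₀).1, i} : Finset _))
  obtain ⟨s, t, hs, ht, hc⟩ := exists_blockColor_detour_three_two a₀ b₀ i₀
  refine ⟨Prod.map id g s, Prod.map id g t, hφ.ne hs, hφ.ne ht, ?_⟩
  change [blockColor (φ a₀) (φ (i₀, s)), blockColor (φ (i₀, t)) (φ (i₀, s)),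
    blockColor (φ (i₀, t)) (φ b₀)].Nodup
  simpa only [φ, blockColor_map f.injective g.injective] using hc

theorem exists_blockColor_detours {n : ℕ} (hn : 2 ≤ n) (hm : 2 ≤ m)
    (a b : Fin (n + 1) × Fin 2 × Fin m) :
    ∃ (w : Fin n → Fin (n + 1) × Fin 2 × Fin m) (z : Fin n → Fin (n + 1) × Fin 2 × Fin m),
      w.Injective ∧ z.Injective ∧ ∀ i, IsRainbowDetour blockColoring a b (w i) (z i) := by
  choose s t hs ht hc using fun i : Fin n => exists_blockColor_detour (by omega) hm a b i.castSucc
  exact ⟨fun i => (i.castSucc, s i), fun i => (i.castSucc, t i),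
    fun i i' h => Fin.castSucc_injective _ (Prod.mk.inj h).1,
    fun i i' h => Fin.castSucc_injective _ (Prod.mk.inj h).1, fun i => ⟨hs i, ht i, hc i⟩⟩

theorem hasRainbowKColoring_blockColoring {k : ℕ} (hk : 2 ≤ k) :
    HasRainbowKColoring (completeBipartiteGraph (Fin k × Fin 2 × Fin ((k + 1) / 2))
      (Fin k × Fin 2 × Fin ((k + 1) / 2))) k 3 := by
  obtain ⟨n, rfl⟩ : ∃ n, k = n + 1 := ⟨k - 1, by omega⟩
  refine completeBipartiteGraph.hasRainbowKColoring_of_detours blockColoring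
    (fun a a' h => le_card_blockColor_ne (by omega) h)
    (fun b b' h => by
      simpa only [blockColoring_inl_inr, blockColor_comm _ b, blockColor_comm _ b'] using
        le_card_blockColor_ne (by omega) h) fun a b => ?_
  obtain rfl | hn := eq_or_ne n 1
  · obtain ⟨w, z, hd⟩ := exists_blockColor_detour_two_one a b
    exact ⟨fun _ => w, fun _ => z, Function.injective_of_subsingleton _,
      Function.injective_of_subsingleton _, fun _ => hd⟩
  · exact exists_blockColor_detours (by omega) (by omega) a b

end BlockColor

theorem stmt4 (k : ℕ) (hk : 2 ≤ k) :
    ∃ r : ℕ, rck (Krr r) k = 3 ∧ r = 2 * k * ((k + 1) / 2) := by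
  refine ⟨_, ?_, rfl⟩
  have hcard : Fintype.card (Fin k × Fin 2 × Fin ((k + 1) / 2)) = 2 * k * ((k + 1) / 2) := by
    simp only [Fintype.card_prod, Fintype.card_fin]; ring
  have : Nontrivial (Fin (2 * k * ((k + 1) / 2))) := by
    rw [Fin.nontrivial_iff_two_le]
    have : 1 ≤ (k + 1) / 2 := by omega
    nlinarith
  let e := Fintype.equivFinOfCardEq hcard
  exact completeBipartiteGraph.rck_eq_three hk
    ((hasRainbowKColoring_blockColoring hk).of_iso (completeBipartiteGraphCongr e e))
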